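/- arXiv:1602.01162 — 7 statements merged into one kernel-verified Lean document; each statement's English description precedes it below -/
import Mathlib

section
/- Let D be a strongly connected simple directed graph with Perron vector φ. If v_1, v_2, …, v_k is a directed walk (each (v_i, v_{i+1}) is an edge of D), then φ(v_1)/φ(v_k) ≤ ∏_{i=1}^{k−1} d⁺(v_i). -/
namespace PR

/-- Out-degree of `u` in the digraph on vertex set `{1,…,n} ⊆ ℕ` with adjacency `E`. -/
def outDeg (n : ℕ) (E : ℕ → ℕ → Bool) (u : ℕ) : ℕ :=
  ((Finset.Icc 1 n).filter (fun v => E u v)).card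

/-- In-degree of `u`. -/
def inDeg (n : ℕ) (E : ℕ → ℕ → Bool) (u : ℕ) : ℕ :=
  ((Finset.Icc 1 n).filter (fun v => E v u)).card

/-- `E` is a simple digraph on the vertex set `{1,…,n}`: all edges join distinct
vertices of `{1,…,n}` (no loops; the `Bool`-valued adjacency precludes multi-edges). -/
def IsDigraph (n : ℕ) (E : ℕ → ℕ → Bool) : Prop :=
  ∀ u v, E u v = true → u ∈ Finset.Icc 1 n ∧ v ∈ Finset.Icc 1 n ∧ u ≠ v

/-- `WalkLen E k u v` : there is a directed walk of length `k` from `u` to `v`. -/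
def WalkLen (E : ℕ → ℕ → Bool) : ℕ → ℕ → ℕ → Prop
  | 0, u, v => u = v
  | (k+1), u, v => ∃ w, E u w = true ∧ WalkLen E k w v

/-- Every vertex reaches every other vertex by a directed walk. -/
def StronglyConnected (n : ℕ) (E : ℕ → ℕ → Bool) : Prop :=
  ∀ u ∈ Finset.Icc 1 n, ∀ v ∈ Finset.Icc 1 n, ∃ k, WalkLen E k u v

/-- Directed distance: number of edges in a shortest directed path from `u` to `v`. -/
noncomputable def dist (E : ℕ → ℕ → Bool) (u v : ℕ) : ℕ :=
  sInf {k | WalkLen E k u v}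

/-- Distance between two sets of vertices. -/
noncomputable def setDist (E : ℕ → ℕ → Bool) (A B : Set ℕ) : ℕ :=
  sInf {k | ∃ a ∈ A, ∃ b ∈ B, dist E a b = k}

/-- `φ` is the Perron vector of the simple random walk on the digraph: a positive
probability distribution on `{1,…,n}` which is stationary, i.e. `φ P = φ` where
`P(u,v) = 1/d⁺(u)` for edges `(u,v)` and `0` otherwise. -/
def IsPerron (n : ℕ) (E : ℕ → ℕ → Bool) (φ : ℕ → ℝ) : Prop :=
  (∀ v ∈ Finset.Icc 1 n, 0 < φ v) ∧
  (∑ v ∈ Finset.Icc 1 n, φ v = 1) ∧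
  (∀ v ∈ Finset.Icc 1 n, φ v =
    ∑ u ∈ Finset.Icc 1 n, if E u v then φ u / (outDeg n E u : ℝ) else 0)

/-- The principal ratio `γ = (max_u φ(u)) / (min_u φ(u))` of a vector `φ` on `{1,…,n}`. -/
noncomputable def pratio (n : ℕ) (φ : ℕ → ℝ) : ℝ :=
  if h : (Finset.Icc 1 n).Nonempty then
    ((Finset.Icc 1 n).sup' h φ) / ((Finset.Icc 1 n).inf' h φ)
  else 0

/-- Vertices attaining the maximum of `φ`. -/
def Vmax (n : ℕ) (φ : ℕ → ℝ) : Set ℕ :=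
  {v | v ∈ Finset.Icc 1 n ∧ ∀ u ∈ Finset.Icc 1 n, φ u ≤ φ v}

/-- Vertices attaining the minimum of `φ`. -/
def Vmin (n : ℕ) (φ : ℕ → ℝ) : Set ℕ :=
  {v | v ∈ Finset.Icc 1 n ∧ ∀ u ∈ Finset.Icc 1 n, φ v ≤ φ u}

lemma edge_bound (n : ℕ) (E : ℕ → ℕ → Bool) (φ : ℕ → ℝ)
    (hD : IsDigraph n E) (hφ : IsPerron n E φ) {u v : ℕ} (he : E u v = true) :
    φ u / (outDeg n E u : ℝ) ≤ φ v := by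
  obtain ⟨hpos, -, hstat⟩ := hφ
  obtain ⟨hu, hv, -⟩ := hD u v he
  rw [hstat v hv]
  have : (if E u v then φ u / (outDeg n E u : ℝ) else 0) ≤
      ∑ x ∈ Finset.Icc 1 n, if E x v then φ x / (outDeg n E x : ℝ) else 0 := by
    apply Finset.single_le_sum (fun x hx => ?_) hu
    split
    · have hd : 0 < outDeg n E x := by
        rw [outDeg, Finset.card_pos]
        exact ⟨v, Finset.mem_filter.2 ⟨hv, by assumption⟩⟩
      have := hpos x hx
      positivity
    · exact le_refl 0
  rw [if_pos he] at this
  exact this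

/-- If `w 0, w 1, …, w k` is a directed walk, then
`φ(w 0) / φ(w k) ≤ ∏_{i=0}^{k-1} d⁺(w i)`. -/
theorem stmt0 (n : ℕ) (E : ℕ → ℕ → Bool) (φ : ℕ → ℝ)
    (hD : IsDigraph n E) (hSC : StronglyConnected n E) (hφ : IsPerron n E φ)
    (k : ℕ) (w : ℕ → ℕ) (hw : ∀ i < k, E (w i) (w (i+1)) = true) :
    φ (w 0) / φ (w k) ≤ ∏ i ∈ Finset.range k, (outDeg n E (w i) : ℝ) := by
  induction k with
  | zero =>
    simp only [Finset.range_zero, Finset.prod_empty]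
    rcases eq_or_ne (φ (w 0)) 0 with h | h
    · simp [h]
    · rw [div_self h]
  | succ k ih =>
    have hwk : ∀ i < k, E (w i) (w (i+1)) = true := fun i hi => hw i (by omega)
    have he := hw k (by omega)
    obtain ⟨hk, hk1, -⟩ := hD _ _ he
    have hb := edge_bound n E φ hD hφ he
    have hdpos : (0:ℝ) < outDeg n E (w k) := by
      have : 0 < outDeg n E (w k) := by
        rw [outDeg, Finset.card_pos]
        exact ⟨w (k+1), Finset.mem_filter.2 ⟨hk1, he⟩⟩
      exact_mod_cast this
    have hφk := hφ.1 _ hk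
    have hφk1 := hφ.1 _ hk1
    have h0pos : 0 ≤ φ (w 0) := by
      rcases Nat.eq_zero_or_pos k with rfl | hkpos
      · exact hφk.le
      · obtain ⟨h0, -, -⟩ := hD _ _ (hw 0 (by omega))
        exact (hφ.1 _ h0).le
    rw [Finset.prod_range_succ]
    have step : φ (w 0) / φ (w (k+1)) ≤ (φ (w 0) / φ (w k)) * (outDeg n E (w k) : ℝ) := by
      rw [div_mul_eq_mul_div, div_le_div_iff₀ hφk1 hφk]
      have h2 := (div_le_iff₀ hdpos).mp hb
      nlinarith
    calc φ (w 0) / φ (w (k+1)) ≤ (φ (w 0) / φ (w k)) * (outDeg n E (w k) : ℝ) := step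
      _ ≤ (∏ i ∈ Finset.range k, (outDeg n E (w i) : ℝ)) * (outDeg n E (w k) : ℝ) :=
        mul_le_mul_of_nonneg_right (ih hwk) hdpos.le

end PR
end

section
/- Let D be a strongly connected simple directed graph on n vertices with Perron vector φ. If dist(u,v) = k for vertices u, v, then φ(u)/φ(v) ≤ (n−1)_k, where (n−1)_k = (n−1)(n−2)⋯(n−k) is the falling factorial. -/
namespace PR

/-- Concatenation of walks. -/
lemma walkLen_trans {E : ℕ → ℕ → Bool} :
    ∀ (a : ℕ) {b u x v : ℕ}, WalkLen E a u x → WalkLen E b x v → WalkLen E (a + b) u v := by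
  intro a
  induction a with
  | zero => intro b u x v h1 h2; cases h1; simpa using h2
  | succ a ih =>
    intro b u x v h1 h2
    obtain ⟨y, hy, hwalk⟩ := h1
    have : WalkLen E (a + b + 1) u v := ⟨y, hy, ih hwalk h2⟩
    have harith : a + 1 + b = a + b + 1 := by omega
    rwa [harith]

/-- A walk of length `k` can be presented as a function `ℕ → ℕ`. -/
lemma walkLen_exists_fun {E : ℕ → ℕ → Bool} :
    ∀ (k u v : ℕ), WalkLen E k u v →
      ∃ w : ℕ → ℕ, w 0 = u ∧ w k = v ∧ ∀ i < k, E (w i) (w (i+1)) = true := by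
  intro k
  induction k with
  | zero => intro u v h; cases h; exact ⟨fun _ => u, rfl, rfl, by omega⟩
  | succ k ih =>
    intro u v h
    obtain ⟨x, hx, hwalk⟩ := h
    obtain ⟨w', hw0, hwk, hwe⟩ := ih x v hwalk
    refine ⟨fun i => if i = 0 then u else w' (i - 1), by simp, by simp [hwk], ?_⟩
    intro i hi
    rcases Nat.eq_zero_or_pos i with h0 | h0
    · subst h0; simpa [hw0] using hx
    · have h1 : i ≠ 0 := by omega
      have h2 : i + 1 ≠ 0 := by omega
      simp only [h1, h2, if_false]
      have : i - 1 < k := by omega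
      have := hwe (i - 1) this
      have harith : i - 1 + 1 = i + 1 - 1 := by omega
      rwa [harith] at this

/-- Segments of a walk given by a function are walks. -/
lemma walk_segment {E : ℕ → ℕ → Bool} {w : ℕ → ℕ} {k : ℕ}
    (h : ∀ i < k, E (w i) (w (i+1)) = true) :
    ∀ (d i : ℕ), i + d ≤ k → WalkLen E d (w i) (w (i + d)) := by
  intro d
  induction d with
  | zero => intro i _; rfl
  | succ d ih =>
    intro i hi
    refine ⟨w (i + 1), h i (by omega), ?_⟩
    have := ih (i + 1) (by omega)
    have harith : i + 1 + d = i + (d + 1) := by omega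
    rwa [harith] at this

/-- If `dist(u,v) = k` then `φ(u)/φ(v) ≤ (n-1)_k`, the falling factorial
`(n-1)(n-2)⋯(n-k)`. -/
theorem stmt1 (n : ℕ) (E : ℕ → ℕ → Bool) (φ : ℕ → ℝ)
    (hD : IsDigraph n E) (hSC : StronglyConnected n E) (hφ : IsPerron n E φ)
    (u v : ℕ) (hu : u ∈ Finset.Icc 1 n) (hv : v ∈ Finset.Icc 1 n)
    (k : ℕ) (hk : dist E u v = k) :
    φ u / φ v ≤ ((n - 1).descFactorial k : ℝ) := by
  classical
  have hSet : {m | WalkLen E m u v}.Nonempty := hSC u hu v hv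
  have hkmem : WalkLen E k u v := hk ▸ Nat.sInf_mem hSet
  have hmin : ∀ m, WalkLen E m u v → k ≤ m := fun m hm => hk ▸ Nat.sInf_le hm
  obtain ⟨w, hw0, hwk, hwe⟩ := walkLen_exists_fun k u v hkmem
  -- all walk vertices lie in {1,…,n}
  have hmem : ∀ i, i ≤ k → w i ∈ Finset.Icc 1 n := by
    intro i hi
    rcases lt_or_eq_of_le hi with h | h
    · exact (hD _ _ (hwe i h)).1
    · rw [h, hwk]; exact hv
  -- the walk is a path: vertices are distinct
  have hinj : ∀ i j, i < j → j ≤ k → w i ≠ w j := by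
    intro i j hij hjk heq
    have h1 : WalkLen E i u (w i) := by
      have := walk_segment hwe i 0 (by omega)
      simpa [hw0] using this
    have h2 : WalkLen E (k - j) (w j) v := by
      have := walk_segment hwe (k - j) j (by omega)
      rwa [show j + (k - j) = k by omega, hwk] at this
    have h3 := walkLen_trans i h1 (heq ▸ h2)
    have := hmin _ h3
    omega
  -- no forward chords
  have hchord : ∀ i j, i + 1 < j → j ≤ k → E (w i) (w j) = false := by
    intro i j hij hjk
    by_contra hcon
    have he : E (w i) (w j) = true := by
      cases hEb : E (w i) (w j) with
      | true => rfl
      | false => exact absurd hEb hcon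
    have h1 : WalkLen E i u (w i) := by
      have := walk_segment hwe i 0 (by omega)
      simpa [hw0] using this
    have h2 : WalkLen E (k - j) (w j) v := by
      have := walk_segment hwe (k - j) j (by omega)
      rwa [show j + (k - j) = k by omega, hwk] at this
    have h3 : WalkLen E (k - j + 1) (w i) v := ⟨w j, he, h2⟩
    have h4 := walkLen_trans i h1 h3
    have := hmin _ h4
    omega
  -- degree bound along the path
  have hdeg : ∀ i, i < k → outDeg n E (w i) ≤ n - (k - i) := by
    intro i hik
    have hS : ∀ j, i ≤ j → j ≤ k → j ≠ i + 1 → E (w i) (w j) = false := by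
      intro j h1 h2 h3
      rcases Nat.lt_or_ge j (i + 1) with h | h
      · have hji : j = i := by omega
        subst hji
        cases hEb : E (w j) (w j) with
        | false => rfl
        | true => exact absurd rfl (hD _ _ hEb).2.2
      · exact hchord i j (by omega) h2
    set T := (Finset.Icc 1 n).filter (fun x => E (w i) x) with hT
    set S := ((Finset.Icc i k).erase (i + 1)).image w with hSdef
    have hScard : S.card = k - i := by
      rw [hSdef, Finset.card_image_of_injOn, Finset.card_erase_of_mem, Nat.card_Icc]
      · omega
      · rw [Finset.mem_Icc]; omega
      · intro a ha b hb hab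
        simp only [Finset.coe_erase, Set.mem_diff, Finset.coe_Icc, Set.mem_Icc] at ha hb
        by_contra hne
        rcases Nat.lt_or_ge a b with h | h
        · exact hinj a b h hb.1.2 hab
        · exact hinj b a (by omega) ha.1.2 hab.symm
    have hsub : T ⊆ (Finset.Icc 1 n) \ S := by
      intro x hx
      rw [hT, Finset.mem_filter] at hx
      rw [Finset.mem_sdiff]
      refine ⟨hx.1, fun hxS => ?_⟩
      rw [hSdef, Finset.mem_image] at hxS
      obtain ⟨j, hj, hjx⟩ := hxS
      rw [Finset.mem_erase, Finset.mem_Icc] at hj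
      have hfalse := hS j hj.2.1 hj.2.2 hj.1
      rw [hjx] at hfalse
      rw [hx.2] at hfalse
      exact Bool.noConfusion hfalse
    have hSsub : S ⊆ Finset.Icc 1 n := by
      intro x hx
      rw [hSdef, Finset.mem_image] at hx
      obtain ⟨j, hj, hjx⟩ := hx
      rw [Finset.mem_erase, Finset.mem_Icc] at hj
      exact hjx ▸ hmem j hj.2.2
    have hle := Finset.card_le_card hsub
    rw [Finset.card_sdiff_of_subset hSsub, Nat.card_Icc, hScard] at hle
    have : T.card = outDeg n E (w i) := rfl
    omega
  -- one-step inequality from stationarity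
  have hstep : ∀ a b, a ∈ Finset.Icc 1 n → b ∈ Finset.Icc 1 n → E a b = true →
      φ a ≤ (outDeg n E a : ℝ) * φ b := by
    intro a b ha hb hab
    have hdpos : 0 < outDeg n E a := by
      rw [outDeg]
      exact Finset.card_pos.2 ⟨b, Finset.mem_filter.2 ⟨hb, hab⟩⟩
    have h2 : φ a / (outDeg n E a : ℝ) ≤ φ b := by
      rw [hφ.2.2 b hb]
      have hs := Finset.single_le_sum
        (f := fun x => if E x b then φ x / (outDeg n E x : ℝ) else 0)
        (fun x hx => by
          by_cases hE : E x b
          · simp only [hE, if_true]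
            have := (hφ.1 x hx).le
            positivity
          · simp [hE]) ha
      simpa [hab] using hs
    have hd0 : (0:ℝ) < (outDeg n E a : ℝ) := by exact_mod_cast hdpos
    calc φ a = (outDeg n E a : ℝ) * (φ a / (outDeg n E a : ℝ)) := by field_simp
    _ ≤ (outDeg n E a : ℝ) * φ b := mul_le_mul_of_nonneg_left h2 hd0.le
  -- chain the inequalities along the path
  have hchain : ∀ m, m ≤ k → φ (w (k - m)) ≤ ((n - 1).descFactorial m : ℝ) * φ v := by
    intro m
    induction m with
    | zero => intro _; simp [hwk]
    | succ m ih =>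
      intro hm
      have ihm := ih (by omega)
      set i := k - (m + 1) with hi
      have hik : i < k := by omega
      have hφpos : 0 < φ (w (i + 1)) := hφ.1 _ (hmem (i + 1) (by omega))
      have h3 : φ (w i) ≤ ((n - (k - i) : ℕ) : ℝ) * φ (w (i + 1)) :=
        le_trans (hstep (w i) (w (i + 1)) (hmem i (by omega)) (hmem (i + 1) (by omega))
            (hwe i hik))
          (mul_le_mul_of_nonneg_right (Nat.cast_le.2 (hdeg i hik)) hφpos.le)
      have hwi1 : w (i + 1) = w (k - m) := by congr 1; omega
      have h4 : n - (k - i) = n - (m + 1) := by omega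
      have hcast : 0 ≤ ((n - (m + 1) : ℕ) : ℝ) := Nat.cast_nonneg _
      calc φ (w i) ≤ ((n - (m + 1) : ℕ) : ℝ) * φ (w (k - m)) := by
            rw [← h4, ← hwi1]; exact h3
      _ ≤ ((n - (m + 1) : ℕ) : ℝ) * (((n - 1).descFactorial m : ℝ) * φ v) :=
            mul_le_mul_of_nonneg_left ihm hcast
      _ = ((n - 1).descFactorial (m + 1) : ℝ) * φ v := by
            rw [← mul_assoc, ← Nat.cast_mul]
            congr 2
            rw [Nat.descFactorial_succ]
            congr 1
            omega
  have hfin := hchain k le_rfl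
  rw [Nat.sub_self, hw0] at hfin
  have hφv : 0 < φ v := hφ.1 v hv
  rw [div_le_iff₀ hφv]
  exact hfin

end PR
end

section
/- For any strongly connected simple directed graph D on n ≥ 2 vertices with Perron vector φ, one has dist(V_max, V_min) ≤ n − 2, where V_max and V_min are the sets of vertices achieving the maximum and minimum values of φ respectively. -/
namespace PR

lemma walk_concat {E : ℕ → ℕ → Bool} {j k u w v : ℕ}
    (h1 : WalkLen E j u w) (h2 : WalkLen E k w v) : WalkLen E (j + k) u v := by
  induction j generalizing u with
  | zero => have : u = w := h1; subst this; simpa using h2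
  | succ j ih =>
    obtain ⟨x, hx, hw⟩ := h1
    have : j + 1 + k = (j + k) + 1 := by omega
    rw [this]
    exact ⟨x, hx, ih hw⟩

lemma walk_mid {E : ℕ → ℕ → Bool} {k u v : ℕ} (h : WalkLen E k u v) :
    ∀ i ≤ k, ∃ w, WalkLen E i u w ∧ WalkLen E (k - i) w v := by
  intro i
  induction i with
  | zero => intro _; exact ⟨u, rfl, by simpa using h⟩
  | succ i ih =>
    intro hik
    obtain ⟨w, hw1, hw2⟩ := ih (by omega)
    have hki : k - i = (k - (i+1)) + 1 := by omega
    rw [hki] at hw2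
    obtain ⟨x, hx, hx2⟩ := hw2
    refine ⟨x, ?_, hx2⟩
    have h1 : WalkLen E 1 w x := ⟨x, hx, rfl⟩
    simpa using walk_concat hw1 h1

lemma walk_mem {n : ℕ} {E : ℕ → ℕ → Bool} (hD : IsDigraph n E) :
    ∀ k u v, WalkLen E k u v → k ≠ 0 → v ∈ Finset.Icc 1 n := by
  intro k
  induction k with
  | zero => intro u v _ h0; exact absurd rfl h0
  | succ k ih =>
    intro u v h _
    obtain ⟨w, hw, h2⟩ := h
    cases k with
    | zero => exact (h2 : w = v) ▸ (hD u w hw).2.1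
    | succ k => exact ih w v h2 (Nat.succ_ne_zero k)


/-- For any strongly connected simple digraph on `n ≥ 2` vertices,
`dist(V_max, V_min) ≤ n - 2`. -/
theorem stmt2 (n : ℕ) (hn : 2 ≤ n) (E : ℕ → ℕ → Bool) (φ : ℕ → ℝ)
    (hD : IsDigraph n E) (hSC : StronglyConnected n E) (hφ : IsPerron n E φ) :
    setDist E (Vmax n φ) (Vmin n φ) ≤ n - 2 := by
  by_contra hcon
  push_neg at hcon
  -- every distance from Vmax to Vmin is at least n - 1
  have hS : ∀ a ∈ Vmax n φ, ∀ b ∈ Vmin n φ, n - 1 ≤ dist E a b := by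
    intro a ha b hb
    by_contra hlt
    push_neg at hlt
    have hle : setDist E (Vmax n φ) (Vmin n φ) ≤ dist E a b :=
      Nat.sInf_le ⟨a, ha, b, hb, rfl⟩
    omega
  have hne : (Finset.Icc 1 n).Nonempty := ⟨1, by simp; omega⟩
  obtain ⟨a, haI, hamax⟩ := Finset.exists_max_image (Finset.Icc 1 n) φ hne
  obtain ⟨b, hbI, hbmin⟩ := Finset.exists_min_image (Finset.Icc 1 n) φ hne
  have haV : a ∈ Vmax n φ := ⟨haI, hamax⟩
  have hbV : b ∈ Vmin n φ := ⟨hbI, hbmin⟩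
  set d := dist E a b with hd
  have hreach : {k | WalkLen E k a b}.Nonempty := hSC a haI b hbI
  have hwalk : WalkLen E d a b := Nat.sInf_mem hreach
  choose w hw1 hw2 using walk_mid hwalk
  -- distance from a to w i is exactly i
  have hdistw : ∀ i (hi : i ≤ d), dist E a (w i hi) = i := by
    intro i hi
    have h1 : dist E a (w i hi) ≤ i := Nat.sInf_le (hw1 i hi)
    have hnz : {k | WalkLen E k a (w i hi)}.Nonempty := ⟨i, hw1 i hi⟩
    have hw : WalkLen E (dist E a (w i hi)) a (w i hi) := Nat.sInf_mem hnz
    have h2 : d ≤ dist E a (w i hi) + (d - i) :=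
      Nat.sInf_le (walk_concat hw (hw2 i hi))
    omega
  have hwI : ∀ i (hi : i ≤ d), w i hi ∈ Finset.Icc 1 n := by
    intro i hi
    rcases Nat.eq_zero_or_pos i with h0 | hp
    · subst h0
      have : a = w 0 hi := hw1 0 hi
      exact this ▸ haI
    · exact walk_mem hD i a _ (hw1 i hi) (by omega)
  -- the map i ↦ w i is injective from Fin (d+1) into Icc 1 n
  have hinj : Function.Injective (fun i : Fin (d+1) => w i.1 (by omega)) := by
    intro i j hij
    have h1 := hdistw i.1 (by omega)
    have h2 := hdistw j.1 (by omega)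
    simp only at hij
    rw [hij] at h1
    exact Fin.ext (h1.symm.trans h2)
  have himg : Finset.image (fun i : Fin (d+1) => w i.1 (by omega)) Finset.univ
      ⊆ Finset.Icc 1 n := by
    intro z hz
    simp only [Finset.mem_image, Finset.mem_univ, true_and] at hz
    obtain ⟨i, rfl⟩ := hz
    exact hwI i.1 (by omega)
  have hcard : d + 1 ≤ n := by
    have := Finset.card_le_card himg
    rw [Finset.card_image_of_injective _ hinj] at this
    simpa [Nat.Icc_eq_range'] using this
  have hdge : n - 1 ≤ d := hS a haV b hbV
  have hdeq : d = n - 1 := by omega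
  -- the image is all of Icc 1 n, so every vertex is some w i
  have himgeq : Finset.image (fun i : Fin (d+1) => w i.1 (by omega)) Finset.univ
      = Finset.Icc 1 n := by
    apply Finset.eq_of_subset_of_card_le himg
    rw [Finset.card_image_of_injective _ hinj]
    simp [Nat.Icc_eq_range']
    omega
  have hsurj : ∀ z ∈ Finset.Icc 1 n, ∃ i : Fin (d+1), w i.1 (by omega) = z := by
    intro z hz
    rw [← himgeq] at hz
    simp only [Finset.mem_image, Finset.mem_univ, true_and] at hz
    exact hz
  have hd1 : 1 ≤ d := by omega
  set w1 := w 1 hd1 with hw1def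
  have hEaw1 : E a w1 = true := by
    obtain ⟨x, hx, hx0⟩ := hw1 1 hd1
    have : x = w1 := hx0
    exact this ▸ hx
  -- a has out-degree 1: its only out-neighbor is w1
  have hout : (Finset.Icc 1 n).filter (fun v => E a v) = {w1} := by
    apply Finset.eq_singleton_iff_unique_mem.mpr
    constructor
    · exact Finset.mem_filter.mpr ⟨hwI 1 hd1, hEaw1⟩
    · intro z hz
      obtain ⟨hzI, hEz⟩ := Finset.mem_filter.mp hz
      obtain ⟨i, hi⟩ := hsurj z hzI
      have hdz : dist E a z ≤ 1 := Nat.sInf_le ⟨z, hEz, rfl⟩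
      have hdz2 : dist E a z = i.1 := by rw [← hi]; exact hdistw i.1 (by omega)
      have hzne : a ≠ z := (hD a z hEz).2.2
      have hine : i.1 ≠ 0 := by
        intro h0
        apply hzne
        have hnz : {k | WalkLen E k a z}.Nonempty := ⟨1, z, hEz, rfl⟩
        have hwz : WalkLen E (dist E a z) a z := Nat.sInf_mem hnz
        rw [hdz2, h0] at hwz
        exact hwz
      have hi1 : i.1 = 1 := by omega
      rw [← hi]
      exact congrArg (fun j : Fin (d+1) => w j.1 (by omega)) (Fin.ext hi1 : i = ⟨1, by omega⟩)
  have houtdeg : outDeg n E a = 1 := by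
    unfold outDeg
    rw [hout]
    simp
  -- stationarity at w1 gives φ w1 ≥ φ a
  have hstat := hφ.2.2 w1 (hwI 1 hd1)
  have hterm : φ a ≤ φ w1 := by
    rw [hstat]
    have hfa : (if E a w1 then φ a / (outDeg n E a : ℝ) else 0) = φ a := by
      rw [if_pos hEaw1, houtdeg]
      simp
    calc φ a = (if E a w1 then φ a / (outDeg n E a : ℝ) else 0) := hfa.symm
      _ ≤ ∑ u ∈ Finset.Icc 1 n, (if E u w1 then φ u / (outDeg n E u : ℝ) else 0) := by
          apply Finset.single_le_sum (f := fun u => if E u w1 then φ u / (outDeg n E u : ℝ) else 0) _ haI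
          intro u hu
          by_cases h : E u w1
          · simp only [if_pos h]
            exact div_nonneg (le_of_lt (hφ.1 u hu)) (Nat.cast_nonneg _)
          · simp [h]
  have hw1V : w1 ∈ Vmax n φ := ⟨hwI 1 hd1, fun u hu => (hamax u hu).trans hterm⟩
  have hdw1b : dist E w1 b ≤ d - 1 := Nat.sInf_le (hw2 1 hd1)
  have := hS w1 hw1V b hbV
  omega


end PR
end

section
/- Let D be a strongly connected simple directed graph with vertex set {v_1,…,v_n}, n ≥ 4, such that v_1, v_2, …, v_n is a shortest directed path from v_1 to v_n, v_2 ∈ V_max, and v_n ∈ V_min. If γ(D) > (2/3)(n−1)!, then N⁺(v_2)={v_1,v_3}, N⁺(v_3)={v_1,v_2,v_4}, and d⁺(v_i) ≥ ⌊2i/3⌋ for all 4 ≤ i ≤ n−1. -/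
namespace PR

/-!
Since `1, 2, …, n` is a shortest path, an edge `i → j` can only go to `j ≤ i + 1`, so
`d⁺(i) ≤ i`. Stationarity along the path edges gives `φ(i) ≤ φ(i+1) d⁺(i)`, hence
`γ = φ(2)/φ(n) ≤ ∏_{2 ≤ i < n} d⁺(i) ≤ (n-1)!`. When `γ > (2/3)(n-1)!`, no single factor can
lose a third of its maximal value: `3 d⁺(j) > 2 j` for every `2 ≤ j < n`. For `j = 2, 3` this
forces `d⁺(j) = j`, so `N⁺(j)` is all of `{1, …, j+1} \ {j}`.
-/

variable {n : ℕ} {E : ℕ → ℕ → Bool}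

theorem WalkLen.trans {k l u v w : ℕ} (h₁ : WalkLen E k u v) (h₂ : WalkLen E l v w) :
    WalkLen E (k + l) u w := by
  induction k generalizing u with
  | zero =>
    obtain rfl : u = v := h₁
    simpa using h₂
  | succ k ih =>
    obtain ⟨x, hux, hxv⟩ := h₁
    rw [Nat.add_right_comm]
    exact ⟨x, hux, ih hxv⟩

theorem WalkLen.single {u v : ℕ} (h : E u v = true) : WalkLen E 1 u v :=
  ⟨v, h, rfl⟩

theorem walkLen_of_path (hpath : ∀ i, 1 ≤ i → i < n → E i (i+1) = true)
    {i j : ℕ} (hi : 1 ≤ i) (hij : i ≤ j) (hjn : j ≤ n) : WalkLen E (j - i) i j := by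
  induction j, hij using Nat.le_induction with
  | base => simp [WalkLen]
  | succ j hij ih =>
    rw [Nat.sub_add_comm hij]
    exact (ih (by omega)).trans (.single (hpath j (by omega) (by omega)))

theorem dist_le_of_walkLen {k u v : ℕ} (h : WalkLen E k u v) : dist E u v ≤ k :=
  Nat.sInf_le h

theorem le_succ_of_edge_of_shortest_path (hD : IsDigraph n E)
    (hpath : ∀ i, 1 ≤ i → i < n → E i (i+1) = true) (hshort : dist E 1 n = n - 1)
    {i j : ℕ} (hij : E i j = true) : j ≤ i + 1 := by
  obtain ⟨hi, hj, -⟩ := hD i j hij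
  rw [Finset.mem_Icc] at hi hj
  have hwalk := ((walkLen_of_path hpath le_rfl hi.1 hi.2).trans (.single hij)).trans
    (walkLen_of_path hpath hj.1 hj.2 le_rfl)
  have := dist_le_of_walkLen hwalk
  omega

theorem filter_edge_subset_of_shortest_path (hD : IsDigraph n E)
    (hpath : ∀ i, 1 ≤ i → i < n → E i (i+1) = true) (hshort : dist E 1 n = n - 1) (i : ℕ) :
    (Finset.Icc 1 n).filter (fun v => E i v) ⊆ (Finset.Icc 1 (i + 1)).erase i := by
  intro v hv
  rw [Finset.mem_filter, Finset.mem_Icc] at hv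
  rw [Finset.mem_erase, Finset.mem_Icc]
  exact ⟨(hD i v hv.2).2.2.symm, hv.1.1, le_succ_of_edge_of_shortest_path hD hpath hshort hv.2⟩

theorem card_Icc_one_succ_erase {i : ℕ} (hi : 1 ≤ i) : ((Finset.Icc 1 (i + 1)).erase i).card = i := by
  rw [Finset.card_erase_of_mem (Finset.mem_Icc.mpr ⟨hi, by omega⟩), Nat.card_Icc]
  omega

theorem outDeg_le_of_shortest_path (hD : IsDigraph n E)
    (hpath : ∀ i, 1 ≤ i → i < n → E i (i+1) = true) (hshort : dist E 1 n = n - 1)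
    {i : ℕ} (hi : 1 ≤ i) : outDeg n E i ≤ i :=
  (Finset.card_le_card (filter_edge_subset_of_shortest_path hD hpath hshort i)).trans
    (card_Icc_one_succ_erase hi).le

theorem edge_iff_of_le_outDeg (hD : IsDigraph n E)
    (hpath : ∀ i, 1 ≤ i → i < n → E i (i+1) = true) (hshort : dist E 1 n = n - 1)
    {i : ℕ} (hi : 1 ≤ i) (hdeg : i ≤ outDeg n E i) (v : ℕ) :
    E i v = true ↔ v ∈ (Finset.Icc 1 (i + 1)).erase i := by
  have heq := Finset.eq_of_subset_of_card_le (filter_edge_subset_of_shortest_path hD hpath hshort i)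
    ((card_Icc_one_succ_erase hi).trans_le hdeg)
  rw [← heq, Finset.mem_filter]
  exact ⟨fun h => ⟨(hD i v h).2.1, h⟩, And.right⟩

theorem IsPerron.le_mul_outDeg {φ : ℕ → ℝ} (hφ : IsPerron n E φ) (hD : IsDigraph n E)
    {u v : ℕ} (huv : E u v = true) : φ u ≤ φ v * outDeg n E u := by
  obtain ⟨hu, hv, -⟩ := hD u v huv
  have hdeg : (0 : ℝ) < outDeg n E u := by
    exact_mod_cast Finset.card_pos.mpr ⟨v, Finset.mem_filter.mpr ⟨hv, huv⟩⟩
  have hterm : φ u / outDeg n E u ≤ φ v := by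
    rw [hφ.2.2 v hv]
    have hnonneg : ∀ w ∈ Finset.Icc 1 n,
        0 ≤ if E w v then φ w / (outDeg n E w : ℝ) else 0 := fun w hw => by
      split_ifs
      exacts [div_nonneg (hφ.1 w hw).le (Nat.cast_nonneg _), le_rfl]
    simpa [huv] using Finset.single_le_sum hnonneg hu
  rwa [div_le_iff₀ hdeg] at hterm

theorem IsPerron.le_mul_prod_outDeg {φ : ℕ → ℝ} (hφ : IsPerron n E φ) (hD : IsDigraph n E)
    (hpath : ∀ i, 1 ≤ i → i < n → E i (i+1) = true) {i j : ℕ} (hi : 1 ≤ i) (hij : i ≤ j)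
    (hjn : j ≤ n) : φ i ≤ φ j * ∏ k ∈ Finset.Ico i j, (outDeg n E k : ℝ) := by
  induction j, hij using Nat.le_induction with
  | base => simp
  | succ j hij ih =>
    calc φ i ≤ φ j * ∏ k ∈ Finset.Ico i j, (outDeg n E k : ℝ) := ih (by omega)
      _ ≤ φ (j + 1) * outDeg n E j * ∏ k ∈ Finset.Ico i j, (outDeg n E k : ℝ) := by
        gcongr
        exact hφ.le_mul_outDeg hD (hpath j (by omega) (by omega))
      _ = φ (j + 1) * ∏ k ∈ Finset.Ico i (j + 1), (outDeg n E k : ℝ) := by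
        rw [Finset.prod_Ico_succ_top hij]
        ring

theorem pratio_eq_div {φ : ℕ → ℝ} {u v : ℕ} (hu : u ∈ Vmax n φ) (hv : v ∈ Vmin n φ) :
    pratio n φ = φ u / φ v := by
  have hne : (Finset.Icc 1 n).Nonempty := ⟨u, hu.1⟩
  rw [pratio, dif_pos hne, le_antisymm (Finset.sup'_le hne φ hu.2) (Finset.le_sup' φ hu.1),
    le_antisymm (Finset.inf'_le φ hv.1) (Finset.le_inf' hne φ hv.2)]

theorem prod_Ico_two_eq_factorial (m : ℕ) : ∏ k ∈ Finset.Ico 2 (m + 1), k = m.factorial := by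
  rcases m with _ | m
  · rfl
  · rw [← Finset.prod_Ico_id_eq_factorial,
      Finset.prod_eq_prod_Ico_succ_bot (by omega : 1 < m + 1 + 1) (fun k => k), one_mul]

theorem mul_lt_mul_of_mul_prod_lt {s : Finset ℕ} {d : ℕ → ℕ} {a b j : ℕ}
    (hd : ∀ k ∈ s, d k ≤ k) (h : a * ∏ k ∈ s, k < b * ∏ k ∈ s, d k) (hj : j ∈ s) :
    a * j < b * d j := by
  rw [← Finset.mul_prod_erase s (fun k => k) hj, ← Finset.mul_prod_erase s d hj] at h
  have hrest : ∏ k ∈ s.erase j, d k ≤ ∏ k ∈ s.erase j, k :=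
    Finset.prod_le_prod' fun k hk => hd k (Finset.mem_of_mem_erase hk)
  refine Nat.lt_of_mul_lt_mul_right (a := ∏ k ∈ s.erase j, k) ?_
  calc a * j * ∏ k ∈ s.erase j, k < b * (d j * ∏ k ∈ s.erase j, d k) := by
        rwa [mul_assoc]
    _ ≤ b * d j * ∏ k ∈ s.erase j, k := by
        rw [mul_assoc]
        gcongr

theorem stmt4_general (n : ℕ) (hn : 4 ≤ n) (E : ℕ → ℕ → Bool) (φ : ℕ → ℝ)
    (hD : IsDigraph n E) (hφ : IsPerron n E φ)
    (hpath : ∀ i, 1 ≤ i → i < n → E i (i+1) = true)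
    (hshort : dist E 1 n = n - 1)
    (hmax : (2:ℕ) ∈ Vmax n φ) (hmin : n ∈ Vmin n φ)
    (hγ : (2/3 : ℝ) * (Nat.factorial (n - 1) : ℝ) < pratio n φ) :
    (∀ v, E 2 v = true ↔ (v = 1 ∨ v = 3)) ∧
    (∀ v, E 3 v = true ↔ (v = 1 ∨ v = 2 ∨ v = 4)) ∧
    (∀ i, 4 ≤ i → i ≤ n - 1 → 2 * i / 3 ≤ outDeg n E i) := by
  have hratio : pratio n φ ≤ ∏ k ∈ Finset.Ico 2 n, (outDeg n E k : ℝ) := by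
    rw [pratio_eq_div hmax hmin, div_le_iff₀' (hφ.1 n hmin.1)]
    exact hφ.le_mul_prod_outDeg hD hpath (by norm_num) (by omega) le_rfl
  have hfact : ∏ k ∈ Finset.Ico 2 n, k = (n - 1).factorial := by
    simpa [Nat.sub_add_cancel (by omega : 1 ≤ n)] using prod_Ico_two_eq_factorial (n - 1)
  have hprod : 2 * ∏ k ∈ Finset.Ico 2 n, k < 3 * ∏ k ∈ Finset.Ico 2 n, outDeg n E k := by
    rw [hfact]
    have : (2 : ℝ) * (n - 1).factorial < 3 * ∏ k ∈ Finset.Ico 2 n, (outDeg n E k : ℝ) := by linarith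
    exact_mod_cast this
  have hdeg : ∀ j, 2 ≤ j → j < n → 2 * j < 3 * outDeg n E j := fun j h2 hjn =>
    mul_lt_mul_of_mul_prod_lt
      (fun k hk => outDeg_le_of_shortest_path hD hpath hshort (by rw [Finset.mem_Ico] at hk; omega))
      hprod (Finset.mem_Ico.mpr ⟨h2, hjn⟩)
  refine ⟨fun v => ?_, fun v => ?_, fun i hi hin => ?_⟩
  · have := hdeg 2 le_rfl (by omega)
    rw [edge_iff_of_le_outDeg hD hpath hshort (by norm_num) (by omega)]
    simp only [Finset.mem_erase, Finset.mem_Icc]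
    omega
  · have := hdeg 3 (by norm_num) (by omega)
    rw [edge_iff_of_le_outDeg hD hpath hshort (by norm_num) (by omega)]
    simp only [Finset.mem_erase, Finset.mem_Icc]
    omega
  · have := hdeg i (by omega) (by omega)
    omega

/-- If `v_1,…,v_n` is a shortest path from `v_1` to `v_n`, `v_2 ∈ V_max`,
`v_n ∈ V_min`, and `γ(D) > (2/3)(n-1)!`, then `N⁺(v_2) = {v_1,v_3}`,
`N⁺(v_3) = {v_1,v_2,v_4}`, and `d⁺(v_i) ≥ ⌊2i/3⌋` for `4 ≤ i ≤ n-1`. -/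
theorem stmt4 (n : ℕ) (hn : 4 ≤ n) (E : ℕ → ℕ → Bool) (φ : ℕ → ℝ)
    (hD : IsDigraph n E) (hSC : StronglyConnected n E) (hφ : IsPerron n E φ)
    (hpath : ∀ i, 1 ≤ i → i < n → E i (i+1) = true)
    (hshort : dist E 1 n = n - 1)
    (hmax : (2:ℕ) ∈ Vmax n φ) (hmin : n ∈ Vmin n φ)
    (hγ : (2/3 : ℝ) * (Nat.factorial (n - 1) : ℝ) < pratio n φ) :
    (∀ v, E 2 v = true ↔ (v = 1 ∨ v = 3)) ∧
    (∀ v, E 3 v = true ↔ (v = 1 ∨ v = 2 ∨ v = 4)) ∧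
    (∀ i, 4 ≤ i → i ≤ n - 1 → 2 * i / 3 ≤ outDeg n E i) :=
  stmt4_general n hn E φ hD hφ hpath hshort hmax hmin hγ

end PR
end

section
/- Let D be a strongly connected simple directed graph with vertex set {v_1,…,v_n} such that v_1, v_2, …, v_n is a shortest directed path from v_1 to v_n, and let φ be its Perron vector. Then there exist positive reals f_1, …, f_n with φ(v_i) = f_i·φ(v_n) for each i, f_n = 1, and for every 2 ≤ k ≤ n the recursion f_k = f_{k−1}/d⁺(v_{k−1}) + Σ_{i ≥ k+1, (v_i,v_k)∈E(D)} f_i/d⁺(v_i) holds. -/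
namespace PR

/-! The Perron vector of a stationary walk satisfies `φ(v_k) = ∑_{(u,v_k) ∈ E} φ(u)/d⁺(u)`.
Along a shortest path `v_1,…,v_n` the only in-neighbour of `v_k` among `v_1,…,v_k` is
`v_{k-1}`: there are no loops, and an edge `v_i → v_k` with `i < k - 1` would shorten the
path. Dividing the stationarity equation at `v_k` by `φ(v_n)` gives the recursion for
`f_i = φ(v_i)/φ(v_n)`. -/

lemma walkLen_add (E : ℕ → ℕ → Bool) {k l u v w : ℕ}
    (huv : WalkLen E k u v) (hvw : WalkLen E l v w) : WalkLen E (k + l) u w := by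
  induction k generalizing u with
  | zero => cases huv; simpa using hvw
  | succ k ih =>
    obtain ⟨x, hux, hxv⟩ := huv
    rw [Nat.add_right_comm]
    exact ⟨x, hux, ih hxv⟩

section ShortestPath

variable {n : ℕ} {E : ℕ → ℕ → Bool} (hpath : ∀ i, 1 ≤ i → i < n → E i (i+1) = true)
include hpath

lemma walkLen_of_consecutive {a b : ℕ} (ha : 1 ≤ a) (hab : a ≤ b) (hb : b ≤ n) :
    WalkLen E (b - a) a b := by
  obtain ⟨d, rfl⟩ := Nat.exists_eq_add_of_le hab
  rw [Nat.add_sub_cancel_left]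
  induction d generalizing a with
  | zero => rfl
  | succ d ih =>
    refine ⟨a + 1, hpath a ha (by omega), ?_⟩
    rw [show a + (d + 1) = a + 1 + d by omega]
    exact ih (by omega) (by omega) (by omega)

lemma adj_eq_false_of_dist_eq (hshort : dist E 1 n = n - 1) {i k : ℕ}
    (hi : 1 ≤ i) (hik : i + 1 < k) (hk : k ≤ n) : E i k = false := by
  by_contra hE
  have hwalk : WalkLen E ((i - 1) + (1 + (n - k))) 1 n :=
    walkLen_add E (walkLen_of_consecutive hpath le_rfl hi (by omega))
      (walkLen_add E ⟨k, Bool.not_eq_false _ ▸ hE, rfl⟩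
        (walkLen_of_consecutive hpath (by omega) hk le_rfl))
  have hle : dist E 1 n ≤ (i - 1) + (1 + (n - k)) := Nat.sInf_le hwalk
  omega

lemma filter_adj_eq_insert_pred (hD : IsDigraph n E) (hshort : dist E 1 n = n - 1)
    {k : ℕ} (hk2 : 2 ≤ k) (hkn : k ≤ n) :
    (Finset.Icc 1 n).filter (fun u => E u k) =
      insert (k - 1) ((Finset.Icc (k + 1) n).filter (fun u => E u k)) := by
  ext u
  simp only [Finset.mem_filter, Finset.mem_Icc, Finset.mem_insert]
  constructor
  · rintro ⟨hu, hE⟩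
    by_cases hlt : u + 1 < k
    · simp [adj_eq_false_of_dist_eq hpath hshort hu.1 hlt hkn] at hE
    · have hne : u ≠ k := (hD u k hE).2.2
      exact (eq_or_ne u (k - 1)).imp_right fun hpred => ⟨⟨by omega, hu.2⟩, hE⟩
  · rintro (hu | ⟨hu, hE⟩)
    · subst hu
      exact ⟨by omega, Nat.sub_add_cancel (by omega : 1 ≤ k) ▸ hpath (k - 1) (by omega) (by omega)⟩
    · exact ⟨by omega, hE⟩

lemma IsPerron.eq_pred_add_sum {φ : ℕ → ℝ} (hφ : IsPerron n E φ) (hD : IsDigraph n E)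
    (hshort : dist E 1 n = n - 1) {k : ℕ} (hk2 : 2 ≤ k) (hkn : k ≤ n) :
    φ k = φ (k - 1) / outDeg n E (k - 1) +
      ∑ i ∈ (Finset.Icc (k + 1) n).filter (fun i => E i k), φ i / outDeg n E i := by
  rw [hφ.2.2 k (by simp; omega), ← Finset.sum_filter,
    filter_adj_eq_insert_pred hpath hD hshort hk2 hkn, Finset.sum_insert (by simp)]

end ShortestPath

theorem stmt6_general (n : ℕ) (hn : 1 ≤ n) (E : ℕ → ℕ → Bool) (φ : ℕ → ℝ)
    (hD : IsDigraph n E) (hφ : IsPerron n E φ)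
    (hpath : ∀ i, 1 ≤ i → i < n → E i (i+1) = true)
    (hshort : dist E 1 n = n - 1) :
    ∃ f : ℕ → ℝ,
      (∀ i ∈ Finset.Icc 1 n, 0 < f i) ∧
      (∀ i ∈ Finset.Icc 1 n, φ i = f i * φ n) ∧
      f n = 1 ∧
      (∀ k, 2 ≤ k → k ≤ n →
        f k = f (k-1) / (outDeg n E (k-1) : ℝ) +
          ∑ i ∈ (Finset.Icc (k+1) n).filter (fun i => E i k),
            f i / (outDeg n E i : ℝ)) := by
  have hφn : 0 < φ n := hφ.1 n (by simp [hn])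
  refine ⟨fun i => φ i / φ n, fun i hi => div_pos (hφ.1 i hi) hφn,
    fun i _ => (div_mul_cancel₀ _ hφn.ne').symm, div_self hφn.ne', fun k hk2 hkn => ?_⟩
  simp only [div_right_comm _ (φ n)]
  rw [← Finset.sum_div, ← add_div, ← hφ.eq_pred_add_sum hpath hD hshort hk2 hkn]

/-- If `v_1,…,v_n` is a shortest path from `v_1` to `v_n` and `φ` the Perron
vector, then there exist positive `f_i` with `φ(v_i) = f_i φ(v_n)`, `f_n = 1`,
satisfying the recursion
`f_k = f_{k-1}/d⁺(v_{k-1}) + ∑_{i ≥ k+1, (v_i,v_k) ∈ E} f_i / d⁺(v_i)`. -/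
theorem stmt6 (n : ℕ) (hn : 1 ≤ n) (E : ℕ → ℕ → Bool) (φ : ℕ → ℝ)
    (hD : IsDigraph n E) (hSC : StronglyConnected n E) (hφ : IsPerron n E φ)
    (hpath : ∀ i, 1 ≤ i → i < n → E i (i+1) = true)
    (hshort : dist E 1 n = n - 1) :
    ∃ f : ℕ → ℝ,
      (∀ i ∈ Finset.Icc 1 n, 0 < f i) ∧
      (∀ i ∈ Finset.Icc 1 n, φ i = f i * φ n) ∧
      f n = 1 ∧
      (∀ k, 2 ≤ k → k ≤ n →
        f k = f (k-1) / (outDeg n E (k-1) : ℝ) +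
          ∑ i ∈ (Finset.Icc (k+1) n).filter (fun i => E i k),
            f i / (outDeg n E i : ℝ)) :=
  stmt6_general n hn E φ hD hφ hpath hshort

end PR
end

section
/- Let D and D′ be strongly connected simple directed graphs on the same vertex set {v_1,…,v_n}, in both of which v_1,…,v_n is a shortest directed path from v_1 to v_n, with Perron vectors φ and ψ respectively. Set f_i = φ(v_i)/φ(v_n) and g_i = ψ(v_i)/ψ(v_n). Suppose there is some 1 ≤ s ≤ n−1 such that d⁺_D(v_i) = d⁺_{D′}(v_i) for every s ≤ i ≤ n, and such that for every s+1 ≤ k ≤ n the sets {i ≥ k+1 : (v_i,v_k)∈E(D)} and {i ≥ k+1 : (v_i,v_k)∈E(D′)} coincide. Then f_i = g_i for every s ≤ i ≤ n. -/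
/-!
Since `1, …, n` is a shortest path, every edge goes at most one step forward. Hence the
stationary equation at `i + 1` involves only `φ i` and the values of `φ` above `i + 1`, and
solving it for `φ i` gives a backward recursion whose coefficients (out-degrees and
in-edges from above) are the same for `D` and `D′` on `[s, n]`. Downward induction from `n`
then gives `ψ = (ψ n / φ n) • φ` on `[s, n]`.
-/

namespace PR

theorem WalkLen.append {E : ℕ → ℕ → Bool} {a b u v w : ℕ}
    (h₁ : WalkLen E a u v) (h₂ : WalkLen E b v w) : WalkLen E (a + b) u w := by
  induction a generalizing u with
  | zero =>
    obtain rfl : u = v := h₁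
    simpa using h₂
  | succ a ih =>
    obtain ⟨x, hux, hx⟩ := h₁
    rw [Nat.succ_add]
    exact ⟨x, hux, ih hx⟩

theorem walkLen_of_path_s7 {n : ℕ} {E : ℕ → ℕ → Bool}
    (hpath : ∀ i, 1 ≤ i → i < n → E i (i+1) = true)
    {a b : ℕ} (ha : 1 ≤ a) (hab : a ≤ b) (hbn : b ≤ n) : WalkLen E (b - a) a b := by
  induction b, hab using Nat.le_induction with
  | base => simp only [Nat.sub_self, WalkLen]
  | succ b hab ih =>
    have hstep : WalkLen E 1 b (b+1) := ⟨b+1, hpath b (ha.trans hab) (by omega), rfl⟩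
    rw [show b + 1 - a = (b - a) + 1 by omega]
    exact (ih (by omega)).append hstep

/-- An edge `i → j` with `j > i + 1` would shortcut the path `1, 2, …, n`. -/
theorem le_succ_of_adj_of_shortest {n : ℕ} {E : ℕ → ℕ → Bool} (hD : IsDigraph n E)
    (hpath : ∀ i, 1 ≤ i → i < n → E i (i+1) = true)
    (hshort : dist E 1 n = n - 1) {i j : ℕ} (hij : E i j = true) : j ≤ i + 1 := by
  by_contra! hji
  obtain ⟨hi, hj, -⟩ := hD i j hij
  rw [Finset.mem_Icc] at hi hj
  have hedge : WalkLen E 1 i j := ⟨j, hij, rfl⟩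
  have hwalk : WalkLen E ((i - 1) + 1 + (n - j)) 1 n :=
    ((walkLen_of_path_s7 hpath le_rfl hi.1 hi.2).append hedge).append
      (walkLen_of_path_s7 hpath hj.1 hj.2 le_rfl)
  have hle : dist E 1 n ≤ (i - 1) + 1 + (n - j) := Nat.sInf_le hwalk
  omega

theorem outDeg_pos_of_path {n : ℕ} {E : ℕ → ℕ → Bool}
    (hpath : ∀ i, 1 ≤ i → i < n → E i (i+1) = true)
    {i : ℕ} (hi : 1 ≤ i) (hin : i < n) : 0 < outDeg n E i :=
  Finset.card_pos.mpr ⟨i + 1, by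
    simp only [Finset.mem_filter, Finset.mem_Icc, hpath i hi hin, and_true]
    omega⟩

noncomputable def inflowAbove (n : ℕ) (E : ℕ → ℕ → Bool) (φ : ℕ → ℝ) (k : ℕ) : ℝ :=
  ∑ u ∈ Finset.Icc (k + 1) n, if E u k then φ u / (outDeg n E u : ℝ) else 0

theorem inflowAbove_eq_mul {n k : ℕ} {E E' : ℕ → ℕ → Bool} {φ ψ : ℕ → ℝ} (c : ℝ)
    (hadj : ∀ u, k < u → u ≤ n → (E u k = true ↔ E' u k = true))
    (hdeg : ∀ u, k < u → u ≤ n → outDeg n E u = outDeg n E' u)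
    (hψ : ∀ u, k < u → u ≤ n → ψ u = c * φ u) :
    inflowAbove n E' ψ k = c * inflowAbove n E φ k := by
  rw [inflowAbove, inflowAbove, Finset.mul_sum]
  refine Finset.sum_congr rfl fun u hu => ?_
  rw [Finset.mem_Icc] at hu
  have hu' : k < u := by omega
  rw [hψ u hu' hu.2, ← hdeg u hu' hu.2, Bool.eq_iff_iff.mpr (hadj u hu' hu.2).symm]
  split_ifs <;> ring

theorem IsPerron.eq_outDeg_mul {n : ℕ} {E : ℕ → ℕ → Bool} {φ : ℕ → ℝ}
    (hφ : IsPerron n E φ) (hD : IsDigraph n E)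
    (hpath : ∀ i, 1 ≤ i → i < n → E i (i+1) = true) (hshort : dist E 1 n = n - 1)
    {i : ℕ} (hi : 1 ≤ i) (hin : i < n) :
    φ i = outDeg n E i * (φ (i+1) - inflowAbove n E φ (i+1)) := by
  have hsub : insert i (Finset.Icc (i+2) n) ⊆ Finset.Icc 1 n := by
    intro u hu
    simp only [Finset.mem_insert, Finset.mem_Icc] at hu ⊢
    omega
  have hrest : ∀ u ∈ Finset.Icc 1 n, u ∉ insert i (Finset.Icc (i+2) n) →
      (if E u (i+1) then φ u / (outDeg n E u : ℝ) else 0) = 0 := by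
    intro u hun hu
    rw [if_neg]
    intro he
    have := le_succ_of_adj_of_shortest hD hpath hshort he
    have := (hD u (i+1) he).2.2
    simp only [Finset.mem_insert, Finset.mem_Icc] at hu hun
    omega
  have hstat := hφ.2.2 (i+1) (by simp only [Finset.mem_Icc]; omega)
  rw [← Finset.sum_subset hsub hrest, Finset.sum_insert (by simp),
    if_pos (hpath i hi hin)] at hstat
  have hd : (outDeg n E i : ℝ) ≠ 0 := by exact_mod_cast (outDeg_pos_of_path hpath hi hin).ne'
  rw [inflowAbove, hstat]
  field_simp
  ring

theorem eq_mul_of_recursion {n s : ℕ} {E E' : ℕ → ℕ → Bool} {φ ψ : ℕ → ℝ} {c : ℝ}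
    (hφ : ∀ i, s ≤ i → i < n → φ i = outDeg n E i * (φ (i+1) - inflowAbove n E φ (i+1)))
    (hψ : ∀ i, s ≤ i → i < n → ψ i = outDeg n E' i * (ψ (i+1) - inflowAbove n E' ψ (i+1)))
    (hdeg : ∀ i, s ≤ i → i ≤ n → outDeg n E i = outDeg n E' i)
    (hnbr : ∀ k, s + 1 ≤ k → k ≤ n → ∀ i, k + 1 ≤ i → (E i k = true ↔ E' i k = true))
    (hn : ψ n = c * φ n) :
    ∀ i, s ≤ i → i ≤ n → ψ i = c * φ i := by
  intro i hsi hin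
  induction hm : n - i using Nat.strong_induction_on generalizing i with
  | _ m ih =>
    obtain rfl | hlt := hin.eq_or_lt
    · exact hn
    have habove : ∀ u, i < u → u ≤ n → ψ u = c * φ u :=
      fun u hiu hun => ih (n - u) (by omega) u (by omega) hun rfl
    have hinflow : inflowAbove n E' ψ (i+1) = c * inflowAbove n E φ (i+1) :=
      inflowAbove_eq_mul c (fun u hu _ => hnbr (i+1) (by omega) (by omega) u hu)
        (fun u hu hun => hdeg u (by omega) hun) (fun u hu hun => habove u (by omega) hun)
    rw [hψ i hsi hlt, hφ i hsi hlt, habove (i+1) (by omega) (by omega), hinflow,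
      ← hdeg i hsi hin]
    ring

theorem stmt7_general (n : ℕ) (E E' : ℕ → ℕ → Bool) (φ ψ : ℕ → ℝ)
    (hD : IsDigraph n E) (hφ : IsPerron n E φ)
    (hD' : IsDigraph n E') (hψ : IsPerron n E' ψ)
    (hpath : ∀ i, 1 ≤ i → i < n → E i (i+1) = true)
    (hshort : dist E 1 n = n - 1)
    (hpath' : ∀ i, 1 ≤ i → i < n → E' i (i+1) = true)
    (hshort' : dist E' 1 n = n - 1)
    (s : ℕ) (hs : 1 ≤ s)
    (hdeg : ∀ i, s ≤ i → i ≤ n → outDeg n E i = outDeg n E' i)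
    (hnbr : ∀ k, s + 1 ≤ k → k ≤ n → ∀ i, k + 1 ≤ i → (E i k = true ↔ E' i k = true)) :
    ∀ i, s ≤ i → i ≤ n → φ i / φ n = ψ i / ψ n := by
  intro i hsi hin
  have hφn : φ n ≠ 0 := (hφ.1 n (by simp only [Finset.mem_Icc]; omega)).ne'
  have hψn : ψ n ≠ 0 := (hψ.1 n (by simp only [Finset.mem_Icc]; omega)).ne'
  have hscale : ∀ j, s ≤ j → j ≤ n → ψ j = ψ n / φ n * φ j :=
    eq_mul_of_recursion
      (fun j hsj hjn => hφ.eq_outDeg_mul hD hpath hshort (hs.trans hsj) hjn)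
      (fun j hsj hjn => hψ.eq_outDeg_mul hD' hpath' hshort' (hs.trans hsj) hjn)
      hdeg hnbr (by field_simp)
  rw [hscale i hsi hin]
  field_simp

/-- If two digraphs `D, D′` on `{v_1,…,v_n}` (with `v_1,…,v_n` a shortest path
from `v_1` to `v_n` in both) agree, for all `s ≤ i ≤ n`, on out-degrees and on
in-neighborhoods from higher-indexed vertices, then `f_i = g_i` for `s ≤ i ≤ n`,
where `f_i = φ(v_i)/φ(v_n)` and `g_i = ψ(v_i)/ψ(v_n)`. -/
theorem stmt7 (n : ℕ) (E E' : ℕ → ℕ → Bool) (φ ψ : ℕ → ℝ)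
    (hD : IsDigraph n E) (hSC : StronglyConnected n E) (hφ : IsPerron n E φ)
    (hD' : IsDigraph n E') (hSC' : StronglyConnected n E') (hψ : IsPerron n E' ψ)
    (hpath : ∀ i, 1 ≤ i → i < n → E i (i+1) = true)
    (hshort : dist E 1 n = n - 1)
    (hpath' : ∀ i, 1 ≤ i → i < n → E' i (i+1) = true)
    (hshort' : dist E' 1 n = n - 1)
    (s : ℕ) (hs : 1 ≤ s) (hsn : s ≤ n - 1)
    (hdeg : ∀ i, s ≤ i → i ≤ n → outDeg n E i = outDeg n E' i)
    (hnbr : ∀ k, s + 1 ≤ k → k ≤ n → ∀ i, k + 1 ≤ i → (E i k = true ↔ E' i k = true)) :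
    ∀ i, s ≤ i → i ≤ n → φ i / φ n = ψ i / ψ n :=
  stmt7_general n E E' φ ψ hD hφ hD' hψ hpath hshort hpath' hshort' s hs hdeg hnbr

end PR
end

section
/- Let D ∈ 𝒟_n and let D⁺ be D with the edge (v_t,v_s) added, where 4 ≤ t ≤ n is the smallest index such that some edge (v_t,v_s) with s < t is missing from D, and s < t is the largest such index for this t. Then the principal ratios satisfy γ(D⁺) > γ(D). -/
namespace PR

/-- Membership in the family `𝒟_n` (together with the Perron vector `φ` of `D`). -/
def memDn (n : ℕ) (E : ℕ → ℕ → Bool) (φ : ℕ → ℝ) : Prop :=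
  IsDigraph n E ∧ StronglyConnected n E ∧ IsPerron n E φ ∧
  -- (i) v_1, v_2, …, v_n is a shortest directed path from v_1 to v_n, of length n-1
  (∀ i, 1 ≤ i → i < n → E i (i+1) = true) ∧ dist E 1 n = n - 1 ∧
  -- (ii) d⁺(v_i) = i for i ∈ {2,3}
  outDeg n E 2 = 2 ∧ outDeg n E 3 = 3 ∧
  -- (iii) d⁺(v_i) ≥ ⌊2i/3⌋ for 4 ≤ i ≤ n-1
  (∀ i, 4 ≤ i → i ≤ n - 1 → 2 * i / 3 ≤ outDeg n E i) ∧
  -- (iv) v_2 ∈ V_max, v_n ∈ V_min, dist(V_max,V_min) = dist(v_2,v_n) = n-2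
  (2:ℕ) ∈ Vmax n φ ∧ n ∈ Vmin n φ ∧
  setDist E (Vmax n φ) (Vmin n φ) = n - 2 ∧ dist E 2 n = n - 2 ∧
  -- (v) some edge (v_j, v_i) with 4 ≤ j ≤ n-1, 1 ≤ i < j is missing
  (∃ j, 4 ≤ j ∧ j ≤ n - 1 ∧ ∃ i, 1 ≤ i ∧ i < j ∧ E j i = false)

lemma walkLen_trans_s10 {E : ℕ → ℕ → Bool} {k l a b c : ℕ}
    (h1 : WalkLen E k a b) (h2 : WalkLen E l b c) : WalkLen E (k + l) a c := by
  induction k generalizing a with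
  | zero => cases h1; simpa using h2
  | succ k ih =>
    obtain ⟨w, hw, hwk⟩ := h1
    rw [Nat.succ_add]
    exact ⟨w, hw, ih hwk⟩

lemma walk_path (E : ℕ → ℕ → Bool) :
    ∀ d a, (∀ i, a ≤ i → i < a + d → E i (i+1) = true) → WalkLen E d a (a + d) := by
  intro d
  induction d with
  | zero => intro a _; rfl
  | succ d ih =>
    intro a h
    refine ⟨a + 1, h a le_rfl (by omega), ?_⟩
    have := ih (a+1) (fun i hi hi2 => h i (by omega) (by omega))
    have he : a + 1 + d = a + (d + 1) := by omega
    rwa [he] at this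

lemma sum_split (n : ℕ) (B : ℕ → ℕ → Bool) (f : ℕ → ℝ) (w : ℕ) (hw : 1 ≤ w) (hwn : w + 1 ≤ n)
    (hns : ∀ u, B u (w+1) = true → w + 1 ≤ u + 1) (hnl : B (w+1) (w+1) = false)
    (hedge : B w (w+1) = true) :
    ∑ u ∈ Finset.Icc 1 n, (if B u (w+1) then f u else 0)
      = f w + ∑ u ∈ Finset.Ioc (w+1) n, (if B u (w+1) then f u else 0) := by
  have hsub : insert w (Finset.Ioc (w+1) n) ⊆ Finset.Icc 1 n := by
    intro u hu
    simp only [Finset.mem_insert, Finset.mem_Ioc, Finset.mem_Icc] at *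
    omega
  have h0 : ∀ u ∈ Finset.Icc 1 n, u ∉ insert w (Finset.Ioc (w+1) n) →
      (if B u (w+1) then f u else 0) = 0 := by
    intro u hu hnu
    simp only [Finset.mem_insert, Finset.mem_Ioc, Finset.mem_Icc, not_or, not_and] at hu hnu
    by_cases hB : B u (w+1) = true
    · have h1 := hns u hB
      have h2 : u ≠ w + 1 := by
        intro h; rw [h] at hB; rw [hnl] at hB; exact absurd hB (by simp)
      omega
    · simp [hB]
  rw [← Finset.sum_subset hsub h0, Finset.sum_insert (by simp only [Finset.mem_Ioc]; omega),
    if_pos hedge]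

lemma split_mid (g : ℕ → ℝ) (v p n : ℕ) (hvp : v ≤ p) (hpn : p + 1 ≤ n) :
    ∑ u ∈ Finset.Ioc v n, g u
      = (∑ u ∈ Finset.Ioc v p, g u) + g (p+1) + ∑ u ∈ Finset.Ioc (p+1) n, g u := by
  rw [← Finset.sum_Ioc_consecutive _ hvp (by omega : p ≤ n)]
  have h : Finset.Ioc p n = insert (p+1) (Finset.Ioc (p+1) n) := by
    ext u; simp only [Finset.mem_Ioc, Finset.mem_insert]; omega
  rw [h, Finset.sum_insert (by simp only [Finset.mem_Ioc]; omega)]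
  ring

set_option maxHeartbeats 1000000 in
/-- Adding the edge `(v_t,v_s)` to `D ∈ 𝒟_n` strictly increases the principal
ratio: `γ(D⁺) > γ(D)`. -/
theorem stmt10 (n t s : ℕ) (E : ℕ → ℕ → Bool) (φ ψ : ℕ → ℝ)
    (hD : memDn n E φ)
    (ht4 : 4 ≤ t) (htn : t ≤ n) (hs1 : 1 ≤ s) (hst : s < t)
    (hmiss : E t s = false)
    (htmin : ∀ t', 4 ≤ t' → t' < t → ∀ s', 1 ≤ s' → s' < t' → E t' s' = true)
    (hsmax : ∀ s', s < s' → s' < t → E t s' = true)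
    (hψ : IsPerron n (fun u v => E u v || (u == t && v == s)) ψ) :
    pratio n ψ > pratio n φ := by
  classical
  obtain ⟨hdg, hsc, hφ, hpath, hdist, hd2, hd3, hd23, hvmax, hvmin, hsetd, hd2n, hmissing⟩ := hD
  set E' : ℕ → ℕ → Bool := fun u v => E u v || (u == t && v == s) with hE'def
  -- basic ranges
  obtain ⟨j, hj4, hjn1, i0, hi01, hi0j, hEji⟩ := hmissing
  have htj : t ≤ j := by
    by_contra h
    push_neg at h
    have := htmin j hj4 h i0 hi01 hi0j
    rw [hEji] at this; exact absurd this (by simp)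
  have htn1 : t + 1 ≤ n := by omega
  have hn5 : 5 ≤ n := by omega
  obtain ⟨p, rfl⟩ : ∃ p, t = p + 1 := ⟨t - 1, by omega⟩
  have hp3 : 3 ≤ p := by omega
  -- no forward shortcuts
  have noshort : ∀ u v, E u v = true → v ≤ u + 1 ∧ 1 ≤ u ∧ u ≤ n ∧ 1 ≤ v ∧ v ≤ n ∧ u ≠ v := by
    intro u v h
    obtain ⟨hu, hv, huv⟩ := hdg u v h
    simp only [Finset.mem_Icc] at hu hv
    refine ⟨?_, hu.1, hu.2, hv.1, hv.2, huv⟩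
    by_contra hc
    push_neg at hc
    have w1 : WalkLen E (u - 1) 1 u := by
      have := walk_path E (u - 1) 1 (fun i hi hi2 => hpath i hi (by omega))
      have he : 1 + (u - 1) = u := by omega
      rwa [he] at this
    have w2 : WalkLen E 1 u v := ⟨v, h, rfl⟩
    have w3 : WalkLen E (n - v) v n := by
      have := walk_path E (n - v) v (fun i hi hi2 => hpath i (by omega) (by omega))
      have he : v + (n - v) = n := by omega
      rwa [he] at this
    have wtot : WalkLen E ((u - 1) + 1 + (n - v)) 1 n :=
      walkLen_trans_s10 (walkLen_trans_s10 w1 w2) w3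
    have hle : dist E 1 n ≤ (u - 1) + 1 + (n - v) := Nat.sInf_le wtot
    rw [hdist] at hle
    omega
  have noloop : ∀ v, E v v = false := by
    intro v
    by_cases h : E v v = true
    · exact absurd rfl (hdg v v h).2.2
    · exact Bool.eq_false_iff.mpr h
  have hE'ne : ∀ u v, u ≠ p + 1 → E' u v = E u v := by
    intro u v hu
    simp only [hE'def]
    have : (u == p + 1) = false := by simpa using hu
    rw [this]
    simp
  have hE'ts : E' (p+1) s = true := by
    simp only [hE'def]
    simp
  have noshort' : ∀ u v, E' u v = true → v ≤ u + 1 := by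
    intro u v h
    simp only [hE'def, Bool.or_eq_true, Bool.and_eq_true, beq_iff_eq] at h
    rcases h with h | ⟨rfl, rfl⟩
    · exact (noshort u v h).1
    · omega
  have noloop' : ∀ v, E' v v = false := by
    intro v
    simp only [hE'def, noloop, Bool.false_or]
    rcases eq_or_ne v (p+1) with rfl | h
    · have : ((p+1 : ℕ) == s) = false := by
        simpa using (by omega : (p+1:ℕ) ≠ s)
      rw [this]; simp
    · have : (v == p+1) = false := by simpa using h
      rw [this]; simp
  have path' : ∀ i, 1 ≤ i → i < n → E' i (i+1) = true := by
    intro i h1 h2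
    simp only [hE'def, hpath i h1 h2, Bool.true_or]
  -- master stationarity equations
  have eqφ : ∀ w, 1 ≤ w → w + 1 ≤ n →
      φ (w+1) = φ w / (outDeg n E w : ℝ)
        + ∑ u ∈ Finset.Ioc (w+1) n, (if E u (w+1) then φ u / (outDeg n E u : ℝ) else 0) := by
    intro w h1 h2
    have hs := hφ.2.2 (w+1) (by simp only [Finset.mem_Icc]; omega)
    rw [hs]
    exact sum_split n E (fun u => φ u / (outDeg n E u : ℝ)) w h1 h2
      (fun u hu => by have := (noshort u (w+1) hu).1; omega) (noloop _) (hpath w h1 (by omega))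
  have eqψ : ∀ w, 1 ≤ w → w + 1 ≤ n →
      ψ (w+1) = ψ w / (outDeg n E' w : ℝ)
        + ∑ u ∈ Finset.Ioc (w+1) n, (if E' u (w+1) then ψ u / (outDeg n E' u : ℝ) else 0) := by
    intro w h1 h2
    have hs := hψ.2.2 (w+1) (by simp only [Finset.mem_Icc]; omega)
    rw [hs]
    exact sum_split n E' (fun u => ψ u / (outDeg n E' u : ℝ)) w h1 h2
      (fun u hu => by have := noshort' u (w+1) hu; omega) (noloop' _) (path' w h1 (by omega))
  -- degrees
  have hdeg_low : ∀ v, 2 ≤ v → v < p + 1 → outDeg n E v = v := by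
    intro v h2 hvt
    rcases (by omega : v = 2 ∨ v = 3 ∨ 4 ≤ v) with rfl | rfl | h4
    · exact hd2
    · exact hd3
    · have hset : (Finset.Icc 1 n).filter (fun u => E v u)
          = insert (v+1) (Finset.Icc 1 (v-1)) := by
        ext u
        simp only [Finset.mem_filter, Finset.mem_insert, Finset.mem_Icc]
        constructor
        · rintro ⟨⟨hu1, hun⟩, hE⟩
          have hb := noshort v u hE
          omega
        · rintro (rfl | ⟨hu1, huv⟩)
          · exact ⟨⟨by omega, by omega⟩, hpath v (by omega) (by omega)⟩
          · exact ⟨⟨hu1, by omega⟩, htmin v h4 hvt u hu1 (by omega)⟩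
      rw [outDeg, hset, Finset.card_insert_of_notMem (by simp only [Finset.mem_Icc]; omega),
        Nat.card_Icc]
      omega
  have hdegE' : ∀ u, u ≠ p + 1 → outDeg n E' u = outDeg n E u := by
    intro u hu
    unfold outDeg
    congr 1
    apply Finset.filter_congr
    intro v _
    rw [hE'ne u v hu]
  have hdegE't : outDeg n E' (p+1) = outDeg n E (p+1) + 1 := by
    have hset : (Finset.Icc 1 n).filter (fun u => E' (p+1) u)
        = insert s ((Finset.Icc 1 n).filter (fun u => E (p+1) u)) := by
      ext u
      simp only [Finset.mem_filter, Finset.mem_insert, Finset.mem_Icc]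
      constructor
      · rintro ⟨hu, hE⟩
        simp only [hE'def, Bool.or_eq_true, Bool.and_eq_true, beq_iff_eq] at hE
        rcases hE with hE | hE
        · exact Or.inr ⟨hu, hE⟩
        · exact Or.inl (by tauto)
      · rintro (rfl | ⟨hu, hE⟩)
        · refine ⟨⟨by omega, by omega⟩, ?_⟩
          simp only [hE'def, Bool.or_eq_true, Bool.and_eq_true, beq_iff_eq]
          tauto
        · refine ⟨hu, ?_⟩
          simp only [hE'def, Bool.or_eq_true]
          exact Or.inl hE
    rw [outDeg, outDeg, hset, Finset.card_insert_of_notMem]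
    simp only [Finset.mem_filter, Finset.mem_Icc, hmiss]
    simp
  have hdpos : ∀ v, 1 ≤ v → v < n → 0 < outDeg n E v := by
    intro v h1 h2
    apply Finset.card_pos.mpr
    exact ⟨v+1, by
      simp only [Finset.mem_filter, Finset.mem_Icc]
      exact ⟨⟨by omega, by omega⟩, hpath v h1 h2⟩⟩
  have φpos : ∀ v, 1 ≤ v → v ≤ n → 0 < φ v := by
    intro v h1 h2
    exact hφ.1 v (by simp only [Finset.mem_Icc]; omega)
  have ψpos : ∀ v, 1 ≤ v → v ≤ n → 0 < ψ v := by
    intro v h1 h2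
    exact hψ.1 v (by simp only [Finset.mem_Icc]; omega)
  have hφn : 0 < φ n := φpos n (by omega) le_rfl
  have hψn : 0 < ψ n := ψpos n (by omega) le_rfl
  set c : ℝ := ψ n / φ n with hcdef
  have hcpos : 0 < c := div_pos hψn hφn
  have hψnc : ψ n = c * φ n := by
    rw [hcdef, div_mul_cancel₀ _ (ne_of_gt hφn)]
  -- the key "upper" relation: ψ v / d'(v) = c * (φ v / d(v)) for all t ≤ v ≤ n
  have Udiv : ∀ k v, p + 1 ≤ v → v ≤ n → n - v ≤ k →
      ψ v / (outDeg n E' v : ℝ) = c * (φ v / (outDeg n E v : ℝ)) := by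
    intro k
    induction k with
    | zero =>
      intro v hv1 hv2 hv3
      have hvn : v = n := by omega
      subst hvn
      rw [hdegE' v (by omega), hψnc, mul_div_assoc]
    | succ k ih =>
      intro v hv1 hv2 hv3
      rcases eq_or_lt_of_le hv2 with rfl | hvlt
      · rw [hdegE' v (by omega), hψnc, mul_div_assoc]
      -- first : ψ (v+1) = c * φ (v+1)
      have hup1 : ψ (v+1) = c * φ (v+1) := by
        rcases eq_or_lt_of_le (show v + 1 ≤ n by omega) with he | hlt
        · rw [he, hψnc]
        · have hdiv := ih (v+1) (by omega) (by omega) (by omega)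
          rw [hdegE' (v+1) (by omega)] at hdiv
          have hd := hdpos (v+1) (by omega) hlt
          have hne : (outDeg n E (v+1) : ℝ) ≠ 0 := by
            exact_mod_cast Nat.pos_iff_ne_zero.mp hd
          calc ψ (v+1) = ψ (v+1) / (outDeg n E (v+1) : ℝ) * (outDeg n E (v+1) : ℝ) := by
                rw [div_mul_cancel₀ _ hne]
            _ = c * (φ (v+1) / (outDeg n E (v+1) : ℝ)) * (outDeg n E (v+1) : ℝ) := by
                rw [hdiv]
            _ = c * φ (v+1) := by
                rw [mul_assoc, div_mul_cancel₀ _ hne]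
      have e1 := eqφ v (by omega) (by omega)
      have e2 := eqψ v (by omega) (by omega)
      have htl : ∑ u ∈ Finset.Ioc (v+1) n, (if E' u (v+1) then ψ u / (outDeg n E' u : ℝ) else 0)
          = c * ∑ u ∈ Finset.Ioc (v+1) n, (if E u (v+1) then φ u / (outDeg n E u : ℝ) else 0) := by
        rw [Finset.mul_sum]
        apply Finset.sum_congr rfl
        intro u hu
        simp only [Finset.mem_Ioc] at hu
        rw [hE'ne u (v+1) (by omega)]
        by_cases hEu : E u (v+1) = true
        · rw [if_pos hEu, if_pos hEu]
          exact ih u (by omega) hu.2 (by omega)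
        · rw [if_neg hEu, if_neg hEu, mul_zero]
      calc ψ v / (outDeg n E' v : ℝ)
          = ψ (v+1) - (∑ u ∈ Finset.Ioc (v+1) n,
              (if E' u (v+1) then ψ u / (outDeg n E' u : ℝ) else 0)) := by
            rw [e2]; ring
        _ = c * φ (v+1) - c * ∑ u ∈ Finset.Ioc (v+1) n,
              (if E u (v+1) then φ u / (outDeg n E u : ℝ) else 0) := by
            rw [hup1, htl]
        _ = c * (φ v / (outDeg n E v : ℝ)) := by
            rw [e1]; ring
  have Ud : ∀ v, p + 1 ≤ v → v ≤ n →
      ψ v / (outDeg n E' v : ℝ) = c * (φ v / (outDeg n E v : ℝ)) :=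
    fun v h1 h2 => Udiv n v h1 h2 (by omega)
  have Up : ∀ u, p + 2 ≤ u → u ≤ n → ψ u = c * φ u := by
    intro u h1 h2
    rcases eq_or_lt_of_le h2 with rfl | hlt
    · exact hψnc
    · have hdiv := Ud u (by omega) h2
      rw [hdegE' u (by omega)] at hdiv
      have hd := hdpos u (by omega) hlt
      have hne : (outDeg n E u : ℝ) ≠ 0 := by
        exact_mod_cast Nat.pos_iff_ne_zero.mp hd
      calc ψ u = ψ u / (outDeg n E u : ℝ) * (outDeg n E u : ℝ) := by
            rw [div_mul_cancel₀ _ hne]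
        _ = c * (φ u / (outDeg n E u : ℝ)) * (outDeg n E u : ℝ) := by rw [hdiv]
        _ = c * φ u := by rw [mul_assoc, div_mul_cancel₀ _ hne]
  -- general tail identity (sums over Ioc x n with x ≥ t)
  have htail : ∀ x v', p + 1 ≤ x →
      (∑ u ∈ Finset.Ioc x n, (if E' u v' then ψ u / (outDeg n E' u : ℝ) else 0))
        = c * ∑ u ∈ Finset.Ioc x n, (if E u v' then φ u / (outDeg n E u : ℝ) else 0) := by
    intro x v' hx
    rw [Finset.mul_sum]
    apply Finset.sum_congr rfl
    intro u hu
    simp only [Finset.mem_Ioc] at hu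
    rw [hE'ne u v' (by omega), hdegE' u (by omega)]
    by_cases hEu : E u v' = true
    · rw [if_pos hEu, if_pos hEu, Up u (by omega) hu.2, mul_div_assoc]
    · rw [if_neg hEu, if_neg hEu, mul_zero]
  have hdt : 0 < outDeg n E (p+1) := hdpos (p+1) (by omega) (by omega)
  have hdtne : (outDeg n E (p+1) : ℝ) ≠ 0 := by
    exact_mod_cast Nat.pos_iff_ne_zero.mp hdt
  set κ : ℝ := c * (φ (p+1) / (outDeg n E (p+1) : ℝ)) with hκdef
  have hκpos : 0 < κ := by
    rw [hκdef]
    have h1 : 0 < φ (p+1) := φpos (p+1) (by omega) (by omega)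
    have h2 : (0:ℝ) < (outDeg n E (p+1) : ℝ) := by exact_mod_cast hdt
    exact mul_pos hcpos (div_pos h1 h2)
  have hψtκ : ψ (p+1) / (outDeg n E' (p+1) : ℝ) = κ := by
    rw [hκdef]; exact Ud (p+1) le_rfl (by omega)
  have hd'ne : (outDeg n E' (p+1) : ℝ) ≠ 0 := by
    rw [hdegE't]; push_cast
    intro h
    have : (0:ℝ) < (outDeg n E (p+1) : ℝ) + 1 := by
      have : (0:ℝ) ≤ (outDeg n E (p+1) : ℝ) := by positivity
      linarith
    linarith
  have hψt : ψ (p+1) = c * φ (p+1) + κ := by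
    have h1 : ψ (p+1) = κ * (outDeg n E' (p+1) : ℝ) := by
      rw [← hψtκ, div_mul_cancel₀ _ hd'ne]
    have h2 : (outDeg n E' (p+1) : ℝ) = (outDeg n E (p+1) : ℝ) + 1 := by
      rw [hdegE't]; push_cast; ring
    have h3 : κ * (outDeg n E (p+1) : ℝ) = c * φ (p+1) := by
      rw [hκdef, mul_assoc, div_mul_cancel₀ _ hdtne]
    rw [h1, h2]
    linarith [h3]
  -- base : δ p = p * κ
  have hbase : ψ p - c * φ p = (p:ℝ) * κ := by
    have e1 := eqφ p (by omega) (by omega)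
    have e2 := eqψ p (by omega) (by omega)
    have hdw : (outDeg n E p : ℝ) = (p:ℝ) := by rw [hdeg_low p (by omega) (by omega)]
    have hdw' : (outDeg n E' p : ℝ) = (p:ℝ) := by
      rw [hdegE' p (by omega), hdeg_low p (by omega) (by omega)]
    rw [hdw] at e1
    rw [hdw', htail (p+1) (p+1) le_rfl] at e2
    have hp0 : ((p:ℝ)) ≠ 0 := by
      have : 0 < p := by omega
      exact_mod_cast Nat.pos_iff_ne_zero.mp this
    have hκp : κ = ψ p / (p:ℝ) - c * (φ p / (p:ℝ)) := by
      linear_combination e2 - hψt - c * e1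
    rw [hκp]
    field_simp
  -- the lower recursion
  have loweq : ∀ w, 2 ≤ w → w + 2 ≤ p + 1 →
      ψ (w+1) - c * φ (w+1)
        = (ψ w - c * φ w) / (w:ℝ)
          + (∑ u ∈ Finset.Ioc (w+1) p, (if E u (w+1) then (ψ u - c * φ u) / (u:ℝ) else 0))
          + (if w + 1 = s then κ else 0) := by
    intro w hw2 hwp
    have e1 := eqφ w (by omega) (by omega)
    have e2 := eqψ w (by omega) (by omega)
    rw [split_mid _ (w+1) p n (by omega) (by omega)] at e1 e2
    have hdw : (outDeg n E w : ℝ) = (w:ℝ) := by rw [hdeg_low w hw2 (by omega)]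
    have hdw' : (outDeg n E' w : ℝ) = (w:ℝ) := by
      rw [hdegE' w (by omega), hdeg_low w hw2 (by omega)]
    rw [hdw] at e1
    rw [hdw', htail (p+1) (w+1) le_rfl, hψtκ] at e2
    have hmidψ : ∑ u ∈ Finset.Ioc (w+1) p, (if E' u (w+1) then ψ u / (outDeg n E' u : ℝ) else 0)
        = ∑ u ∈ Finset.Ioc (w+1) p, (if E u (w+1) then ψ u / (u:ℝ) else 0) := by
      apply Finset.sum_congr rfl
      intro u hu; simp only [Finset.mem_Ioc] at hu
      rw [hE'ne u (w+1) (by omega), hdegE' u (by omega), hdeg_low u (by omega) (by omega)]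
    rw [hmidψ] at e2
    have hmidφ : ∑ u ∈ Finset.Ioc (w+1) p, (if E u (w+1) then φ u / (outDeg n E u : ℝ) else 0)
        = ∑ u ∈ Finset.Ioc (w+1) p, (if E u (w+1) then φ u / (u:ℝ) else 0) := by
      apply Finset.sum_congr rfl
      intro u hu; simp only [Finset.mem_Ioc] at hu
      rw [hdeg_low u (by omega) (by omega)]
    rw [hmidφ] at e1
    have hAB : ∑ u ∈ Finset.Ioc (w+1) p, (if E u (w+1) then (ψ u - c * φ u) / (u:ℝ) else 0)
        = (∑ u ∈ Finset.Ioc (w+1) p, (if E u (w+1) then ψ u / (u:ℝ) else 0))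
          - c * (∑ u ∈ Finset.Ioc (w+1) p, (if E u (w+1) then φ u / (u:ℝ) else 0)) := by
      rw [Finset.mul_sum, ← Finset.sum_sub_distrib]
      apply Finset.sum_congr rfl
      intro u hu
      by_cases hEu : E u (w+1) = true
      · rw [if_pos hEu, if_pos hEu, if_pos hEu]; ring
      · rw [if_neg hEu, if_neg hEu, if_neg hEu]; ring
    have het : (if E' (p+1) (w+1) then κ else 0)
        = c * (if E (p+1) (w+1) then φ (p+1) / (outDeg n E (p+1) : ℝ) else 0)
          + (if w + 1 = s then κ else 0) := by
      by_cases hws : w + 1 = s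
      · rw [if_pos hws]
        have h1 : E (p+1) (w+1) = false := by rw [hws]; exact hmiss
        have h2 : E' (p+1) (w+1) = true := by rw [hws]; exact hE'ts
        rw [if_pos h2, if_neg (by simp [h1]), mul_zero, zero_add]
      · rw [if_neg hws]
        have h2 : E' (p+1) (w+1) = E (p+1) (w+1) := by
          simp only [hE'def]
          have : ((w+1 : ℕ) == s) = false := by simpa using hws
          rw [this]; simp
        rw [h2, add_zero]
        by_cases hEt : E (p+1) (w+1) = true
        · rw [if_pos hEt, if_pos hEt, hκdef]
        · rw [if_neg hEt, if_neg hEt, mul_zero]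
    rw [het] at e2
    rw [hAB]
    linear_combination e2 - c * e1
  -- the invariant: going down from p, the perturbation grows
  have hQbase : 2 * ((∑ u ∈ Finset.Ioc p p, (ψ u - c * φ u) / (u:ℝ)) + κ) ≤ ψ p - c * φ p
      ∧ 0 ≤ ∑ u ∈ Finset.Ioc p p, (ψ u - c * φ u) / (u:ℝ) := by
    rw [Finset.Ioc_self, Finset.sum_empty]
    constructor
    · rw [hbase]
      have h3 : (3:ℝ) ≤ (p:ℝ) := by exact_mod_cast hp3
      nlinarith [hκpos]
    · exact le_rfl
  have hQ : ∀ k v, 3 ≤ v → v ≤ p → p - v ≤ k →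
      (2 * ((∑ u ∈ Finset.Ioc v p, (ψ u - c * φ u) / (u:ℝ)) + κ) ≤ ψ v - c * φ v
        ∧ 0 ≤ ∑ u ∈ Finset.Ioc v p, (ψ u - c * φ u) / (u:ℝ)) := by
    intro k
    induction k with
    | zero =>
      intro v h3 hvp hk
      have hvp' : v = p := by omega
      subst hvp'
      exact hQbase
    | succ k ih =>
      intro v h3 hvp hk
      rcases eq_or_lt_of_le hvp with rfl | hvlt
      · exact hQbase
      have hv1p : v + 1 ≤ p := by omega
      have hδpos : ∀ u, v + 1 ≤ u → u ≤ p → 2 * κ ≤ ψ u - c * φ u := by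
        intro u h1 h2
        obtain ⟨ha, hb⟩ := ih u (by omega) h2 (by omega)
        linarith
      have he := loweq v (by omega) (by omega)
      have hT : (∑ u ∈ Finset.Ioc (v+1) p, (if E u (v+1) then (ψ u - c * φ u) / (u:ℝ) else 0))
          ≤ ∑ u ∈ Finset.Ioc (v+1) p, (ψ u - c * φ u) / (u:ℝ) := by
        apply Finset.sum_le_sum
        intro u hu
        simp only [Finset.mem_Ioc] at hu
        have hδu : 0 ≤ (ψ u - c * φ u) / (u:ℝ) := by
          apply div_nonneg
          · linarith [hδpos u (by omega) hu.2, hκpos]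
          · positivity
        by_cases hEu : E u (v+1) = true
        · rw [if_pos hEu]
        · rw [if_neg hEu]; exact hδu
      have hEb : (if v + 1 = s then κ else 0) ≤ κ := by
        by_cases h : v + 1 = s
        · rw [if_pos h]
        · rw [if_neg h]; linarith [hκpos]
      obtain ⟨hQ1, hQ2⟩ := ih (v+1) (by omega) hv1p (by omega)
      have hdq : (ψ (v+1) - c * φ (v+1)) / 2 ≤ (ψ v - c * φ v) / (v:ℝ) := by
        linarith [he, hT, hEb, hQ1]
      have hv0 : (0:ℝ) < (v:ℝ) := by
        have : 0 < v := by omega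
        exact_mod_cast this
      have hδv : (v:ℝ) * ((ψ (v+1) - c * φ (v+1)) / 2) ≤ ψ v - c * φ v := by
        have := (le_div_iff₀' hv0).mp hdq
        linarith [this]
      have hSv : (∑ u ∈ Finset.Ioc v p, (ψ u - c * φ u) / (u:ℝ))
          = (ψ (v+1) - c * φ (v+1)) / ((v+1 : ℕ):ℝ)
            + ∑ u ∈ Finset.Ioc (v+1) p, (ψ u - c * φ u) / (u:ℝ) := by
        have h : Finset.Ioc v p = insert (v+1) (Finset.Ioc (v+1) p) := by
          ext u; simp only [Finset.mem_Ioc, Finset.mem_insert]; omega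
        rw [h, Finset.sum_insert (by simp only [Finset.mem_Ioc]; omega)]
      have hδv1pos : 0 ≤ ψ (v+1) - c * φ (v+1) := by
        linarith [hδpos (v+1) le_rfl hv1p, hκpos]
      have h4 : (ψ (v+1) - c * φ (v+1)) / ((v+1 : ℕ):ℝ) ≤ (ψ (v+1) - c * φ (v+1)) / 4 := by
        apply div_le_div_of_nonneg_left hδv1pos (by norm_num)
        have : (4:ℕ) ≤ v + 1 := by omega
        exact_mod_cast this
      have hv3 : (3:ℝ) ≤ (v:ℝ) := by exact_mod_cast h3
      have hδv32 : (3/2) * (ψ (v+1) - c * φ (v+1)) ≤ ψ v - c * φ v := by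
        nlinarith [hδv, hδv1pos, mul_nonneg (sub_nonneg.mpr hv3) hδv1pos]
      constructor
      · rw [hSv]
        linarith [hQ1, h4, hδv32]
      · rw [hSv]
        have : 0 ≤ (ψ (v+1) - c * φ (v+1)) / ((v+1 : ℕ):ℝ) := div_nonneg hδv1pos (by positivity)
        linarith [hQ2]
  -- conclude δ 2 > 0
  have hδ2 : 0 < ψ 2 - c * φ 2 := by
    obtain ⟨hQ1, hQ2⟩ := hQ p 3 le_rfl hp3 (by omega)
    have he2 := loweq 2 le_rfl (by omega)
    norm_num at he2
    have hδpos3 : ∀ u, 3 < u → u ≤ p → 2 * κ ≤ ψ u - c * φ u := by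
      intro u h1 h2
      obtain ⟨ha, hb⟩ := hQ p u (by omega) h2 (by omega)
      linarith
    have hT3 : (∑ u ∈ Finset.Ioc 3 p, (if E u 3 then (ψ u - c * φ u) / (u:ℝ) else 0))
        ≤ ∑ u ∈ Finset.Ioc 3 p, (ψ u - c * φ u) / (u:ℝ) := by
      apply Finset.sum_le_sum
      intro u hu
      simp only [Finset.mem_Ioc] at hu
      have hδu : 0 ≤ (ψ u - c * φ u) / (u:ℝ) := by
        apply div_nonneg
        · linarith [hδpos3 u hu.1 hu.2, hκpos]
        · positivity
      by_cases hEu : E u 3 = true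
      · rw [if_pos hEu]
      · rw [if_neg hEu]; exact hδu
    have hE3 : (if 3 = s then κ else 0) ≤ κ := by
      by_cases h : 3 = s
      · rw [if_pos h]
      · rw [if_neg h]; linarith [hκpos]
    linarith [he2, hT3, hE3, hQ1, hQ2, hκpos]
  -- final assembly
  have hicc : (Finset.Icc 1 n).Nonempty := ⟨1, by simp only [Finset.mem_Icc]; omega⟩
  simp only [Vmax, Set.mem_setOf_eq] at hvmax
  simp only [Vmin, Set.mem_setOf_eq] at hvmin
  have h2mem : (2:ℕ) ∈ Finset.Icc 1 n := by simp only [Finset.mem_Icc]; omega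
  have hnmem : n ∈ Finset.Icc 1 n := by simp only [Finset.mem_Icc]; omega
  have hsupφ : (Finset.Icc 1 n).sup' hicc φ = φ 2 :=
    le_antisymm (Finset.sup'_le _ _ (fun u hu => hvmax.2 u hu)) (Finset.le_sup' _ h2mem)
  have hinfφ : (Finset.Icc 1 n).inf' hicc φ = φ n :=
    le_antisymm (Finset.inf'_le _ hnmem) (Finset.le_inf' _ _ (fun u hu => hvmin.2 u hu))
  have hprφ : pratio n φ = φ 2 / φ n := by rw [pratio, dif_pos hicc, hsupφ, hinfφ]
  have hsupψ : ψ 2 ≤ (Finset.Icc 1 n).sup' hicc ψ := Finset.le_sup' _ h2mem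
  have hinfψle : (Finset.Icc 1 n).inf' hicc ψ ≤ ψ n := Finset.inf'_le _ hnmem
  have hinfψpos : 0 < (Finset.Icc 1 n).inf' hicc ψ := by
    obtain ⟨a, ha, hav⟩ := Finset.exists_mem_eq_inf' hicc ψ
    rw [hav]; exact hψ.1 a ha
  have hψ2pos : 0 < ψ 2 := ψpos 2 (by omega) (by omega)
  have hkey : φ 2 / φ n < ψ 2 / ψ n := by
    rw [hψnc]
    have heq : φ 2 / φ n = (c * φ 2) / (c * φ n) := by
      rw [mul_div_mul_left _ _ (ne_of_gt hcpos)]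
    rw [heq]
    have hcn : 0 < c * φ n := mul_pos hcpos hφn
    exact (div_lt_div_iff_of_pos_right hcn).mpr (by linarith [hδ2])
  rw [gt_iff_lt, hprφ, pratio, dif_pos hicc]
  calc φ 2 / φ n < ψ 2 / ψ n := hkey
    _ ≤ ψ 2 / (Finset.Icc 1 n).inf' hicc ψ :=
        div_le_div_of_nonneg_left (le_of_lt hψ2pos) hinfψpos hinfψle
    _ ≤ (Finset.Icc 1 n).sup' hicc ψ / (Finset.Icc 1 n).inf' hicc ψ :=
        (div_le_div_iff_of_pos_right hinfψpos).mpr hsupψ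

end PR
end
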